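/- Let S and T be nontrivial left cancellative monoids whose monoid coproduct S ∗ T is left cancellative. If h ∈ I_ℓ(S ∗ T) maps some element of ι_S(S) into ι_S(S) (i.e. there is s ∈ S with ι_S(s) ∈ dom h and h(ι_S(s)) ∈ ι_S(S)), then h belongs to the canonical copy of I_ℓ(S) in I_ℓ(S ∗ T), i.e. h = (λ_{ι_S s_{2n}})^{-1} λ_{ι_S s_{2n-1}} ⋯ (λ_{ι_S s_2})^{-1} λ_{ι_S s_1} for some s_1, …, s_{2n} ∈ S. -/

import Mathlib

/-!
Every `x` in a free product `∗ A` factors uniquely as `x = of a * m` with `a ∈ A i` and `m` not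
beginning with a letter of `A i`, so a partial map `g` of `A i` extends to `∗ A` by acting on `a`.
Call `h` a translated extension if `h = λ_u ∘ ext g` with `g ∈ I_ℓ(A i)`. The identity is one, and
the class is closed under left translations and under `λ_c⁻¹` whenever the result is still defined
at some `of s`. Peel off the letters `of a` of `c` one at a time: right multiplication by `of σ`
does not change a leading letter from another factor, so comparing leading syllables in
`of a * y = u * of σ` shows that either `of a` left-divides `u`, and `λ_{of a}⁻¹ λ_u` is again a
translation, or `a` and `u` lie in `A i`, and `λ_{of a}⁻¹ λ_u ∘ ext g = ext (λ_a⁻¹ λ_u g)`.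
Hence every `h ∈ I_ℓ(∗ A)` defined at some `of s` is a translated extension `λ_u ∘ ext g`. If
moreover `h (of s) = of s'`, then `u * of σ = of s'` forces `u ∈ of (A i)`, so `h = ext (λ_u g)`
lies in the copy of `I_ℓ(A i)`. The coproduct `S ∗ T` is the case of a `Bool`-indexed family.
-/

open scoped Classical

namespace SgC

variable {M : Type*}

/-- Composition of partial maps (`g` after `f`). -/
def pcomp (g f : M → Option M) : M → Option M := fun s => (f s).bind g

/-- The canonical partial inverse of a partial map (the genuine inverse when the map
is injective on its domain, as is the case for all maps in the left inverse hull of a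
left cancellative monoid). -/
noncomputable def pinv (f : M → Option M) : M → Option M :=
  fun t => if h : ∃ s, f s = some t then some h.choose else none

/-- Left translation `t ↦ s * t` as an everywhere-defined partial map. -/
def ptransl [Mul M] (s : M) : M → Option M := fun t => some (s * t)

/-- The identity partial map. -/
def pid : M → Option M := fun s => some s

/-- The block `q⁻¹ ∘ p`: first multiply on the left by `p`, then remove `q` on the left. -/
noncomputable def pblock [Mul M] (p : M × M) : M → Option M :=
  pcomp (pinv (ptransl p.2)) (ptransl p.1)

/-- Membership in the left inverse hull `I_ℓ(M)`: `h` is of the form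
`s₂ₙ⁻¹ s₂ₙ₋₁ ⋯ s₂⁻¹ s₁` for some `n ≥ 1` and `sᵢ ∈ M` (the list records the pairs
`(s₁,s₂), (s₃,s₄), …`, applied left to right). -/
def InInvHull [Mul M] (h : M → Option M) : Prop :=
  ∃ l : List (M × M), l ≠ [] ∧
    h = l.foldl (fun acc p => pcomp (pblock p) acc) pid

/-- Membership in the inverse hull generated by translations by elements of `σ` only
(used for canonical copies of `I_ℓ(S)` inside partial maps of a larger monoid). -/
def InInvHullOn [Mul M] (σ : Set M) (h : M → Option M) : Prop :=
  ∃ l : List (M × M), l ≠ [] ∧ (∀ p ∈ l, p.1 ∈ σ ∧ p.2 ∈ σ) ∧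
    h = l.foldl (fun acc p => pcomp (pblock p) acc) pid

/-- Domain of a partial map. -/
def pdom (h : M → Option M) : Set M := {s | h s ≠ none}

/-- `h` fixes the set `Y` pointwise (in particular `Y ⊆ dom h`). -/
def PFixes (h : M → Option M) (Y : Set M) : Prop := ∀ s ∈ Y, h s = some s

/-- Preimage of a set under a partial map. -/
def ppre (h : M → Option M) (X : Set M) : Set M := {s | ∃ x ∈ X, h s = some x}

/-- Constructible right ideals: domains of elements of the left inverse hull. -/
def IsConstructible [Mul M] (X : Set M) : Prop := ∃ h, InInvHull h ∧ X = pdom h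

/-- Membership in `J̄(S)`: sets of the form `X₀` or `X₀ ∖ (X₁ ∪ ⋯ ∪ Xₘ)` with all
`Xᵢ` constructible. -/
def IsConstructibleBar [Mul M] (X : Set M) : Prop :=
  ∃ (X₀ : Set M) (m : ℕ) (Xi : Fin m → Set M),
    IsConstructible X₀ ∧ (∀ i, IsConstructible (Xi i)) ∧ X = X₀ \ ⋃ i, Xi i

/-- `Xi` is a foundation family for `X`: each `Xi i ⊆ X` and every nonempty
constructible right ideal contained in `X` intersects some `Xi i`. -/
def IsFoundation [Mul M] (X : Set M) {ι : Type*} (Xi : ι → Set M) : Prop :=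
  (∀ i, Xi i ⊆ X) ∧
  ∀ Y : Set M, IsConstructible Y → Y.Nonempty → Y ⊆ X → ∃ i, (Y ∩ Xi i).Nonempty

/-- Strong C*-regularity. -/
def StronglyRegular (M : Type*) [Monoid M] : Prop :=
  ∀ (n : ℕ) (h : Fin n → M → Option M), (∀ k, InInvHull (h k)) →
  ∀ (m : ℕ) (X : Set M) (Xi : Fin m → Set M),
    IsConstructible X → (∀ i, IsConstructible (Xi i)) →
    (X \ ⋃ i, Xi i).Nonempty →
    (X \ ⋃ i, Xi i) ⊆ ⋃ k, {s | h k s = some s} →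
    ∃ (l : ℕ) (Y : Fin l → Set M) (kk : Fin l → Fin n),
      (∀ j, IsConstructible (Y j)) ∧
      (X \ ⋃ i, Xi i) ⊆ ⋃ j, Y j ∧
      ∀ j, PFixes (h (kk j)) (Y j)

/-- C*-regularity. -/
def Regular (M : Type*) [Monoid M] : Prop :=
  ∀ (n : ℕ) (h : Fin n → M → Option M), (∀ k, InInvHull (h k)) →
  ∀ X : Set M, IsConstructibleBar X → X.Nonempty →
    X ⊆ ⋃ k, {s | h k s = some s} →
    ∃ (l : ℕ) (Y : Fin l → Set M) (kk : Fin l → Fin n),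
      (∀ j, IsConstructibleBar (Y j)) ∧ X ⊆ ⋃ j, Y j ∧
      ∀ j, PFixes (h (kk j)) (Y j)

/-- Strong C*-regularity on the boundary. -/
def StronglyRegularOnBoundary (M : Type*) [Monoid M] : Prop :=
  ∀ (n : ℕ) (h : Fin n → M → Option M), (∀ k, InInvHull (h k)) →
  ∀ (m : ℕ) (X : Set M) (Xi : Fin m → Set M),
    IsConstructible X → (∀ i, IsConstructible (Xi i)) → (∀ i, Xi i ⊆ X) →
    (X \ ⋃ i, Xi i).Nonempty →
    (X \ ⋃ i, Xi i) ⊆ ⋃ k, {s | h k s = some s} →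
    ∃ (l : ℕ) (Y : Fin l → Set M) (kk : Fin l → Fin n),
      (∀ j, IsConstructible (Y j)) ∧ (∀ j, PFixes (h (kk j)) (Y j)) ∧
      IsFoundation X (Sum.elim Xi Y)

/-- C*-regularity on the boundary. -/
def RegularOnBoundary (M : Type*) [Monoid M] : Prop :=
  ∀ (n : ℕ) (h : Fin n → M → Option M), (∀ k, InInvHull (h k)) →
  ∀ (m : ℕ) (X : Set M) (Xi : Fin m → Set M),
    IsConstructible X → (∀ i, IsConstructible (Xi i)) → (∀ i, Xi i ⊆ X) →
    (X \ ⋃ i, Xi i).Nonempty →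
    (X \ ⋃ i, Xi i) ⊆ ⋃ k, {s | h k s = some s} →
    ∃ (l : ℕ) (Y : Fin l → Set M) (kk : Fin l → Fin n),
      (∀ j, IsConstructibleBar (Y j)) ∧ (∀ j, PFixes (h (kk j)) (Y j)) ∧
      IsFoundation X (Sum.elim Xi Y)

/-- The type of constructible right ideals `J(M)`. -/
def CIdeal (M : Type*) [Mul M] : Type _ := {X : Set M // IsConstructible X}

/-- The character space `{0,1}^{J(M)}` with the topology of pointwise convergence. -/
abbrev CharSpace (M : Type*) [Mul M] : Type _ := CIdeal M → Bool

/-- The principal character `χ_s`. -/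
noncomputable def princhar [Mul M] (s : M) : CharSpace M :=
  fun X => decide (s ∈ X.1)

/-- `Ω(M)`: the closure of the set of principal characters. -/
noncomputable def Omega (M : Type*) [Mul M] : Set (CharSpace M) :=
  closure (Set.range (princhar : M → CharSpace M))

/-- Filters on `J(M)`: nonempty collections of nonempty constructible ideals closed
under intersections and enlargements within `J(M)`. -/
def IsFilterOn [Mul M] (F : Set (CIdeal M)) : Prop :=
  F.Nonempty ∧ (∀ X ∈ F, (X.1 : Set M).Nonempty) ∧
  (∀ X ∈ F, ∀ Y ∈ F, ∀ Z : CIdeal M, Z.1 = X.1 ∩ Y.1 → Z ∈ F) ∧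
  (∀ X ∈ F, ∀ Y : CIdeal M, X.1 ⊆ Y.1 → Y ∈ F)

/-- Nonzero multiplicative `{0,1}`-valued maps on `J(M)`. -/
def IsChar [Mul M] (χ : CharSpace M) : Prop :=
  (∃ X, χ X = true) ∧
  ∀ X Y Z : CIdeal M, Z.1 = X.1 ∩ Y.1 → χ Z = (χ X && χ Y)

/-- Maximal characters: characters whose associated filter is maximal among filters. -/
def IsMaximalChar [Mul M] (χ : CharSpace M) : Prop :=
  IsChar χ ∧ IsFilterOn {X | χ X = true} ∧
  ∀ G : Set (CIdeal M), IsFilterOn G → {X | χ X = true} ⊆ G → G = {X | χ X = true}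

/-- The set of maximal characters `Ω_max(M)`. -/
def OmegaMax (M : Type*) [Mul M] : Set (CharSpace M) := {χ | IsMaximalChar χ}

/-- The boundary `∂Ω(M)`: the closure of the set of maximal characters. -/
noncomputable def BoundaryOmega (M : Type*) [Mul M] : Set (CharSpace M) :=
  closure (OmegaMax M)

section PartialMaps

lemma pcomp_assoc (h g f : M → Option M) : pcomp h (pcomp g f) = pcomp (pcomp h g) f := by
  funext x
  simp only [pcomp, Option.bind_assoc]
  rfl

lemma pid_pcomp (f : M → Option M) : pcomp pid f = f :=
  funext fun x => Option.bind_fun_some (f x)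

lemma pdom_pcomp_subset (g f : M → Option M) : pdom (pcomp g f) ⊆ pdom f := by
  intro x hx hfx
  simp [pdom, pcomp, hfx] at hx

end PartialMaps

section Blocks

variable [Mul M]

lemma pblock_apply (p : M × M) (x : M) : pblock p x = pinv (ptransl p.2) (p.1 * x) :=
  rfl

lemma foldl_pcomp_pblock_append (l : List (M × M)) (p : M × M) :
    (l ++ [p]).foldl (fun acc p => pcomp (pblock p) acc) pid =
      pcomp (pblock p) (l.foldl (fun acc p => pcomp (pblock p) acc) pid) := by
  simp

lemma InInvHull.pcomp_pblock {g : M → Option M} (hg : InInvHull g) (p : M × M) :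
    InInvHull (pcomp (pblock p) g) := by
  obtain ⟨l, -, rfl⟩ := hg
  exact ⟨l ++ [p], by simp, (foldl_pcomp_pblock_append l p).symm⟩

variable [IsLeftCancelMul M]

lemma pinv_ptransl_eq_some {b z y : M} : pinv (ptransl b) z = some y ↔ b * y = z := by
  unfold pinv
  split_ifs with h
  · have hspec : b * h.choose = z := by simpa [ptransl] using h.choose_spec
    rw [Option.some.injEq]
    exact ⟨fun hy => hy ▸ hspec, fun hy => mul_left_cancel (hspec.trans hy.symm)⟩
  · simp only [false_iff]
    exact fun hy => h ⟨y, by simp [ptransl, hy]⟩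

end Blocks

section Translations

variable [Semigroup M]

lemma pcomp_ptransl_ptransl (a b : M) : pcomp (ptransl a) (ptransl b) = ptransl (a * b) := by
  funext x
  simp [pcomp, ptransl, mul_assoc]

variable [IsLeftCancelMul M]

lemma pcomp_pinv_ptransl_ptransl (c v : M) :
    pcomp (pinv (ptransl c)) (ptransl (c * v)) = ptransl v :=
  funext fun x => pinv_ptransl_eq_some.2 (mul_assoc c v x).symm

lemma pinv_ptransl_mul (c d : M) :
    pinv (ptransl (c * d)) = pcomp (pinv (ptransl d)) (pinv (ptransl c)) := by
  funext z
  refine Option.ext fun y => ?_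
  simp only [pcomp, Option.bind_eq_some_iff, pinv_ptransl_eq_some]
  exact ⟨fun h => ⟨d * y, by rw [← mul_assoc, h], rfl⟩, fun ⟨w, hw, hy⟩ => by
    rw [mul_assoc, hy, hw]⟩

end Translations

section Unit

variable [MulOneClass M]

lemma pcomp_ptransl_one (f : M → Option M) : pcomp (ptransl 1) f = f := by
  funext x
  cases hf : f x <;> simp [pcomp, ptransl, hf]

variable [IsLeftCancelMul M]

lemma pinv_ptransl_one : pinv (ptransl (1 : M)) = pid :=
  funext fun z => pinv_ptransl_eq_some.2 (one_mul z)

lemma pblock_one (b : M) : pblock (b, 1) = ptransl b := by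
  funext x
  rw [pblock_apply, pinv_ptransl_one]
  rfl

lemma inInvHull_pid : InInvHull (pid : M → Option M) := by
  refine ⟨[(1, 1)], by simp, funext fun x => ?_⟩
  simp [pcomp, pblock, pid, ptransl, pinv_ptransl_one]

end Unit

section Transport

variable {N : Type*} [Mul M] [Mul N]

def pconj (e : M ≃* N) (h : M → Option M) : N → Option N := fun y => (h (e.symm y)).map e

lemma pconj_pcomp (e : M ≃* N) (g f : M → Option M) :
    pconj e (pcomp g f) = pcomp (pconj e g) (pconj e f) := by
  funext y
  cases hf : f (e.symm y) <;> simp [pconj, pcomp, hf]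

lemma pconj_pid (e : M ≃* N) : pconj e pid = pid := by
  funext y
  simp [pconj, pid]

lemma pconj_symm_pconj (e : M ≃* N) (h : M → Option M) : pconj e.symm (pconj e h) = h := by
  funext x
  simp [pconj, Option.map_map]

variable [IsLeftCancelMul M] [IsLeftCancelMul N]

lemma pconj_pblock (e : M ≃* N) (p : M × M) : pconj e (pblock p) = pblock (e p.1, e p.2) := by
  funext y
  refine Option.ext fun z => ?_
  simp only [pconj, pblock_apply, Option.map_eq_some_iff, pinv_ptransl_eq_some]
  constructor
  · rintro ⟨x, hx, rfl⟩
    rw [← map_mul, hx, map_mul, MulEquiv.apply_symm_apply]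
  · intro hz
    refine ⟨e.symm z, ?_, e.apply_symm_apply z⟩
    rw [← e.injective.eq_iff, map_mul, map_mul, e.apply_symm_apply, e.apply_symm_apply, hz]

lemma pconj_foldl (e : M ≃* N) (l : List (M × M)) :
    pconj e (l.foldl (fun acc p => pcomp (pblock p) acc) pid) =
      (l.map fun p => (e p.1, e p.2)).foldl (fun acc p => pcomp (pblock p) acc) pid := by
  induction l using List.reverseRecOn with
  | nil => exact pconj_pid e
  | append_singleton l p ih =>
    rw [List.map_append, List.map_singleton, foldl_pcomp_pblock_append,
      foldl_pcomp_pblock_append, pconj_pcomp, ih, pconj_pblock]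

lemma InInvHull.pconj {h : M → Option M} (hh : InInvHull h) (e : M ≃* N) :
    InInvHull (pconj e h) := by
  obtain ⟨l, hl, rfl⟩ := hh
  exact ⟨_, by simpa using hl, pconj_foldl e l⟩

lemma InInvHullOn.pconj {σ : Set M} {h : M → Option M} (hh : InInvHullOn σ h) (e : M ≃* N) :
    InInvHullOn (e '' σ) (pconj e h) := by
  obtain ⟨l, hl, hσ, rfl⟩ := hh
  refine ⟨_, by simpa using hl, fun _ hp => ?_, pconj_foldl e l⟩
  obtain ⟨q, hq, rfl⟩ := List.mem_map.1 hp
  exact ⟨Set.mem_image_of_mem e (hσ q hq).1, Set.mem_image_of_mem e (hσ q hq).2⟩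

end Transport

section FreeProduct

open Monoid (CoprodI)
open Monoid.CoprodI

variable {ι : Type*} {A : ι → Type*} [∀ i, Monoid (A i)]

section NormalForm

open Monoid.CoprodI.Word

noncomputable def leadIdx (x : CoprodI A) : Option ι := (Word.equiv x).fstIdx

noncomputable def headAt (i : ι) (x : CoprodI A) : A i :=
  (equivPair i (Word.equiv x)).head

noncomputable def tailAt (i : ι) (x : CoprodI A) : CoprodI A :=
  (equivPair i (Word.equiv x)).tail.prod

lemma equiv_mul (x y : CoprodI A) : Word.equiv (x * y) = x • Word.equiv y :=
  mul_smul x y (Word.empty : Word A)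

lemma equiv_prod (w : Word A) : Word.equiv w.prod = w :=
  Word.equiv.apply_symm_apply w

lemma prod_equiv (x : CoprodI A) : (Word.equiv x).prod = x :=
  Word.equiv.symm_apply_apply x

lemma leadIdx_prod (w : Word A) : leadIdx w.prod = w.fstIdx := by
  rw [leadIdx, equiv_prod]

lemma of_headAt_mul_tailAt (i : ι) (x : CoprodI A) : of (headAt i x) * tailAt i x = x := by
  rw [headAt, tailAt, ← prod_rcons, ← equivPair_symm, Equiv.symm_apply_apply, prod_equiv]

lemma headAt_of_mul {i : ι} (a : A i) (x : CoprodI A) :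
    headAt i (of a * x) = a * headAt i x := by
  simp only [headAt, equiv_mul, equivPair_smul_same]

lemma tailAt_of_mul {i : ι} (a : A i) (x : CoprodI A) :
    tailAt i (of a * x) = tailAt i x := by
  simp only [tailAt, equiv_mul, equivPair_smul_same]

lemma leadIdx_tailAt_ne (i : ι) (x : CoprodI A) : leadIdx (tailAt i x) ≠ some i := by
  rw [leadIdx, tailAt, equiv_prod]
  exact (equivPair i _).fstIdx_ne

lemma headAt_eq_one {i : ι} {x : CoprodI A} (hx : leadIdx x ≠ some i) :
    headAt i x = 1 := by
  rw [headAt, equivPair_eq_of_fstIdx_ne hx]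

lemma tailAt_eq_self {i : ι} {x : CoprodI A} (hx : leadIdx x ≠ some i) :
    tailAt i x = x := by
  rw [tailAt, equivPair_eq_of_fstIdx_ne hx, prod_equiv]

lemma of_mul_eq_of_mul_iff {i : ι} {a b : A i} {m m' : CoprodI A}
    (hm : leadIdx m ≠ some i) (hm' : leadIdx m' ≠ some i) :
    of a * m = of b * m' ↔ a = b ∧ m = m' := by
  refine ⟨fun h => ⟨?_, ?_⟩, fun ⟨hab, hmm⟩ => hab ▸ hmm ▸ rfl⟩
  · simpa [headAt_of_mul, headAt_eq_one hm, headAt_eq_one hm'] using congrArg (headAt i) h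
  · simpa [tailAt_of_mul, tailAt_eq_self hm, tailAt_eq_self hm'] using congrArg (tailAt i) h

lemma leadIdx_eq_none_iff {x : CoprodI A} : leadIdx x = none ↔ x = 1 := by
  refine ⟨fun h => ?_, fun h => by simp [h, leadIdx, Word.equiv, fstIdx]⟩
  have hw : Word.equiv x = Word.empty := by
    ext1
    simpa [leadIdx, fstIdx] using h
  rw [← prod_equiv x, hw, prod_empty]

lemma leadIdx_of_mul {i : ι} {a : A i} (ha : a ≠ 1) {x : CoprodI A}
    (hx : leadIdx x ≠ some i) : leadIdx (of a * x) = some i := by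
  rw [leadIdx, equiv_mul, ← cons_eq_smul (h1 := hx) (h2 := ha)]
  exact fstIdx_cons a _ hx ha

lemma leadIdx_of_ne {i k : ι} (hk : k ≠ i) (a : A i) : leadIdx (of a : CoprodI A) ≠ some k := by
  by_cases ha : a = 1
  · simp [ha, leadIdx_eq_none_iff.2]
  · rw [← mul_one (of a), leadIdx_of_mul ha (by simp [leadIdx_eq_none_iff.2])]
    simpa using hk.symm

lemma leadIdx_mul_of_eq_some_iff {i k : ι} (hk : k ≠ i) (σ : A i) (x : CoprodI A) :
    leadIdx (x * of σ) = some k ↔ leadIdx x = some k := by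
  suffices ∀ w : Word A, leadIdx (w.prod * of σ) = some k ↔ w.fstIdx = some k by
    simpa only [prod_equiv, leadIdx] using this (Word.equiv x)
  intro w
  induction w using Word.consRecOn generalizing k with
  | empty => simpa [fstIdx] using leadIdx_of_ne hk σ
  | cons j t w hw ht ih =>
    rw [prod_cons, mul_assoc, fstIdx_cons]
    obtain rfl | hji := eq_or_ne j i
    · simp only [Option.some.injEq, hk.symm, iff_false]
      cases hfw : w.fstIdx with
      | none =>
        rw [← leadIdx_prod, leadIdx_eq_none_iff] at hfw
        rw [hfw, one_mul, ← map_mul]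
        exact leadIdx_of_ne hk _
      | some k' =>
        have hk' : k' ≠ j := fun h => hw (h ▸ hfw)
        rw [leadIdx_of_mul ht ((ih hk').2 hfw ▸ by simpa using hk')]
        simpa using hk.symm
    · rw [leadIdx_of_mul ht ((ih hji).not.2 hw)]

end NormalForm

lemma headAt_of {i : ι} (s : A i) : headAt i (of s : CoprodI A) = s := by
  simpa [headAt_eq_one (x := (1 : CoprodI A)) (by simp [leadIdx_eq_none_iff.2])] using
    headAt_of_mul s 1

lemma tailAt_of {i : ι} (s : A i) : tailAt i (of s : CoprodI A) = 1 := by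
  simpa [tailAt_eq_self (x := (1 : CoprodI A)) (by simp [leadIdx_eq_none_iff.2])] using
    tailAt_of_mul s 1

lemma exists_leadIdx_mul_of {i : ι} {x : CoprodI A} (hx : leadIdx x ≠ some i) (hx1 : x ≠ 1)
    (σ : A i) : ∃ k ≠ i, leadIdx (x * of σ) = some k := by
  obtain ⟨k, hk⟩ := Option.ne_none_iff_exists'.1 (mt leadIdx_eq_none_iff.1 hx1)
  have hki : k ≠ i := fun e => hx (e ▸ hk)
  exact ⟨k, hki, (leadIdx_mul_of_eq_some_iff hki σ x).2 hk⟩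

lemma exists_eq_of_mul_of_of_mul_eq {j : ι} (a : A j) {y u z : CoprodI A}
    (h : of a * y = u * z) (hz : leadIdx (tailAt j u * z) ≠ some j) : ∃ v, u = of a * v := by
  have hhead := congrArg (headAt j) h
  rw [← of_headAt_mul_tailAt j u, mul_assoc, headAt_of_mul, headAt_of_mul, headAt_eq_one hz,
    mul_one] at hhead
  refine ⟨of (headAt j y) * tailAt j u, ?_⟩
  rw [← mul_assoc, ← map_mul, hhead, of_headAt_mul_tailAt]

theorem of_dvd_or_mem_range_of_of_mul_eq {i j : ι} (a : A j) (σ : A i) {y u : CoprodI A}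
    (h : of a * y = u * of σ) :
    (∃ v, u = of a * v) ∨ (j = i ∧ u ∈ Set.range (of : A i →* CoprodI A)) := by
  obtain rfl | hji := eq_or_ne j i
  · by_cases hu : tailAt j u = 1
    · exact Or.inr ⟨rfl, headAt j u, by simpa [hu] using of_headAt_mul_tailAt j u⟩
    · obtain ⟨k, hkj, hk⟩ := exists_leadIdx_mul_of (leadIdx_tailAt_ne j u) hu σ
      refine Or.inl (exists_eq_of_mul_of_of_mul_eq a h ?_)
      simpa [hk] using hkj
  · exact Or.inl (exists_eq_of_mul_of_of_mul_eq a h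
      ((leadIdx_mul_of_eq_some_iff hji σ _).not.2 (leadIdx_tailAt_ne j u)))

lemma mem_range_of_of_mul_of_eq_of {i : ι} {u : CoprodI A} {σ s : A i}
    (h : u * of σ = of s) : u ∈ Set.range (of : A i →* CoprodI A) := by
  by_cases hu : tailAt i u = 1
  · exact ⟨headAt i u, by simpa [hu] using of_headAt_mul_tailAt i u⟩
  obtain ⟨k, hki, hk⟩ := exists_leadIdx_mul_of (leadIdx_tailAt_ne i u) hu σ
  have hone : leadIdx (1 : CoprodI A) ≠ some i := by simp [leadIdx_eq_none_iff.2]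
  rw [← of_headAt_mul_tailAt i u, mul_assoc, ← mul_one (of s),
    of_mul_eq_of_mul_iff (by simpa [hk] using hki) hone] at h
  simp [h.2, leadIdx_eq_none_iff.2] at hk

section Extension

variable {i : ι}

/-- The canonical copy of a partial map of `A i` among those of `∗ A`: it acts on the leading
`A i`-syllable. -/
noncomputable def pextend (i : ι) (g : A i → Option (A i)) :
    CoprodI A → Option (CoprodI A) :=
  fun x => (g (headAt i x)).map fun σ => of σ * tailAt i x

lemma pextend_pid : pextend i (pid : A i → Option (A i)) = pid :=
  funext fun x => by simp [pextend, pid, of_headAt_mul_tailAt]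

lemma pextend_apply_of (g : A i → Option (A i)) (s : A i) :
    pextend i g (of s) = (g s).map of := by
  simp [pextend, headAt_of, tailAt_of]

variable [IsLeftCancelMul (CoprodI A)]

lemma exists_mul_eq_mul_of_of_mem_pdom {c u : CoprodI A} {g : A i → Option (A i)} {s : A i}
    (hs : of s ∈ pdom (pcomp (pinv (ptransl c)) (pcomp (ptransl u) (pextend i g)))) :
    ∃ (y : CoprodI A) (σ : A i), c * y = u * of σ := by
  cases hgs : g s with
  | none => simp [pdom, pcomp, pextend_apply_of, hgs] at hs
  | some σ =>
    obtain ⟨y, hy⟩ := Option.ne_none_iff_exists'.1 hs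
    refine ⟨y, σ, pinv_ptransl_eq_some.1 ?_⟩
    simpa [pcomp, ptransl, pextend_apply_of, hgs] using hy

variable [IsLeftCancelMul (A i)]

lemma pinv_ptransl_of_of_mul (a τ : A i) {m : CoprodI A} (hm : leadIdx m ≠ some i) :
    pinv (ptransl (of a)) (of τ * m) = (pinv (ptransl a) τ).map fun ρ => of ρ * m := by
  refine Option.ext fun y => ?_
  simp only [Option.map_eq_some_iff, pinv_ptransl_eq_some]
  constructor
  · intro h
    rw [← of_headAt_mul_tailAt i y, ← mul_assoc, ← map_mul,
      of_mul_eq_of_mul_iff (leadIdx_tailAt_ne i y) hm] at h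
    exact ⟨headAt i y, h.1, by rw [← h.2, of_headAt_mul_tailAt]⟩
  · rintro ⟨ρ, rfl, rfl⟩
    rw [map_mul, mul_assoc]

lemma pcomp_pblock_pextend (b a : A i) (g : A i → Option (A i)) :
    pcomp (pblock (of b, of a)) (pextend i g) = pextend i (pcomp (pblock (b, a)) g) := by
  funext x
  simp only [pcomp, pextend]
  cases g (headAt i x) with
  | none => rfl
  | some σ =>
    simp only [Option.map_some, Option.bind_some, pblock_apply]
    rw [← mul_assoc, ← map_mul, pinv_ptransl_of_of_mul a _ (leadIdx_tailAt_ne i x)]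

lemma pextend_foldl (l : List (A i × A i)) :
    pextend i (l.foldl (fun acc p => pcomp (pblock p) acc) pid) =
      (l.map fun p => (of p.1, of p.2)).foldl (fun acc p => pcomp (pblock p) acc) pid := by
  induction l using List.reverseRecOn with
  | nil => exact pextend_pid
  | append_singleton l p ih =>
    rw [List.map_append, List.map_singleton, foldl_pcomp_pblock_append,
      foldl_pcomp_pblock_append, ← ih, pcomp_pblock_pextend]

lemma InInvHull.inInvHullOn_pextend {g : A i → Option (A i)} (hg : InInvHull g) :
    InInvHullOn (Set.range (of : A i →* CoprodI A)) (pextend i g) := by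
  obtain ⟨l, hl, rfl⟩ := hg
  refine ⟨l.map fun p => (of p.1, of p.2), by simpa using hl, fun _ hp => ?_, pextend_foldl l⟩
  obtain ⟨q, -, rfl⟩ := List.mem_map.1 hp
  exact ⟨⟨q.1, rfl⟩, ⟨q.2, rfl⟩⟩

end Extension

section TranslatedExtension

variable {i : ι}

def IsTranslatedExtension (i : ι) (h : CoprodI A → Option (CoprodI A)) : Prop :=
  ∃ (u : CoprodI A) (g : A i → Option (A i)),
    InInvHull g ∧ h = pcomp (ptransl u) (pextend i g)

lemma IsTranslatedExtension.pcomp_ptransl {h : CoprodI A → Option (CoprodI A)}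
    (hh : IsTranslatedExtension i h) (c : CoprodI A) :
    IsTranslatedExtension i (pcomp (ptransl c) h) := by
  obtain ⟨u, g, hg, rfl⟩ := hh
  exact ⟨c * u, g, hg, by rw [pcomp_assoc, pcomp_ptransl_ptransl]⟩

variable [IsLeftCancelMul (A i)]

lemma isTranslatedExtension_pid :
    IsTranslatedExtension i (pid : CoprodI A → Option (CoprodI A)) :=
  ⟨1, pid, inInvHull_pid, by rw [pextend_pid, pcomp_ptransl_one]⟩

variable [IsLeftCancelMul (CoprodI A)]

lemma IsTranslatedExtension.pcomp_pinv_ptransl_of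
    {h : CoprodI A → Option (CoprodI A)} (hh : IsTranslatedExtension i h)
    {j : ι} (a : A j) {s : A i} (hs : of s ∈ pdom (pcomp (pinv (ptransl (of a))) h)) :
    IsTranslatedExtension i (pcomp (pinv (ptransl (of a))) h) := by
  obtain ⟨u, g, hg, rfl⟩ := hh
  obtain ⟨y, σ, hy⟩ := exists_mul_eq_mul_of_of_mem_pdom hs
  rcases of_dvd_or_mem_range_of_of_mul_eq a σ hy with ⟨v, rfl⟩ | ⟨rfl, b, rfl⟩
  · exact ⟨v, g, hg, by rw [pcomp_assoc, pcomp_pinv_ptransl_ptransl]⟩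
  · refine ⟨1, pcomp (pblock (b, a)) g, hg.pcomp_pblock _, ?_⟩
    rw [pcomp_ptransl_one, ← pcomp_pblock_pextend, pcomp_assoc]
    rfl

lemma IsTranslatedExtension.pcomp_pinv_ptransl
    {h : CoprodI A → Option (CoprodI A)} (hh : IsTranslatedExtension i h)
    (c : CoprodI A) {s : A i} (hs : of s ∈ pdom (pcomp (pinv (ptransl c)) h)) :
    IsTranslatedExtension i (pcomp (pinv (ptransl c)) h) := by
  induction c using induction_left generalizing h with
  | one => rwa [pinv_ptransl_one, pid_pcomp]
  | mul a c ih =>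
    rw [pinv_ptransl_mul, ← pcomp_assoc] at hs ⊢
    exact ih (hh.pcomp_pinv_ptransl_of a (pdom_pcomp_subset _ _ hs)) hs

lemma IsTranslatedExtension.pcomp_pblock {h : CoprodI A → Option (CoprodI A)}
    (hh : IsTranslatedExtension i h) (p : CoprodI A × CoprodI A) {s : A i}
    (hs : of s ∈ pdom (pcomp (pblock p) h)) : IsTranslatedExtension i (pcomp (pblock p) h) := by
  have hp : pcomp (pblock p) h = pcomp (pinv (ptransl p.2)) (pcomp (ptransl p.1) h) :=
    (pcomp_assoc _ _ _).symm
  rw [hp] at hs ⊢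
  exact (hh.pcomp_ptransl p.1).pcomp_pinv_ptransl p.2 hs

lemma InInvHull.isTranslatedExtension {h : CoprodI A → Option (CoprodI A)}
    (hh : InInvHull h) {s : A i} (hs : of s ∈ pdom h) : IsTranslatedExtension i h := by
  obtain ⟨l, -, rfl⟩ := hh
  induction l using List.reverseRecOn with
  | nil => exact isTranslatedExtension_pid
  | append_singleton l p ih =>
    rw [foldl_pcomp_pblock_append] at hs ⊢
    exact (ih (pdom_pcomp_subset _ _ hs)).pcomp_pblock p hs

lemma IsTranslatedExtension.inInvHullOn {h : CoprodI A → Option (CoprodI A)}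
    (hh : IsTranslatedExtension i h) {s s' : A i} (hs : h (of s) = some (of s')) :
    InInvHullOn (Set.range (of : A i →* CoprodI A)) h := by
  obtain ⟨u, g, hg, rfl⟩ := hh
  cases hgs : g s with
  | none => simp [pcomp, pextend_apply_of, hgs] at hs
  | some σ =>
    have hu : u * of σ = of s' := by simpa [pcomp, ptransl, pextend_apply_of, hgs] using hs
    obtain ⟨b, rfl⟩ := mem_range_of_of_mul_of_eq_of hu
    rw [← pblock_one, ← map_one of, pcomp_pblock_pextend]
    exact (hg.pcomp_pblock _).inInvHullOn_pextend

end TranslatedExtension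

theorem InInvHull.inInvHullOn_range_of [IsLeftCancelMul (CoprodI A)] {i : ι}
    {h : CoprodI A → Option (CoprodI A)} (hh : InInvHull h) {s s' : A i}
    (hs : h (of s) = some (of s')) :
    InInvHullOn (Set.range (of : A i →* CoprodI A)) h := by
  have : IsLeftCancelMul (A i) :=
    (of_injective i).isLeftCancelMul _ (map_mul of)
  exact (hh.isTranslatedExtension (s := s) (by simp [pdom, hs])).inInvHullOn hs

end FreeProduct

section Coprod

open Monoid

universe u v

/-- `S ∗ T` is the coproduct of this `Bool`-indexed family; `ULift` puts both factors in the one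
universe that `CoprodI` requires. -/
abbrev coprodSummand (S : Type u) (T : Type v) (b : Bool) : Type (max u v) :=
  cond b (ULift.{v} S) (ULift.{u} T)

variable {S : Type u} {T : Type v} [Monoid S] [Monoid T]

instance : ∀ b, Monoid (coprodSummand S T b)
  | true => ULift.monoid
  | false => ULift.monoid

noncomputable def coprodEquivCoprodI : Coprod S T ≃* CoprodI (coprodSummand S T) :=
  MonoidHom.toMulEquiv
    (Coprod.lift ((CoprodI.of (i := true)).comp MulEquiv.ulift.symm.toMonoidHom)
      ((CoprodI.of (i := false)).comp MulEquiv.ulift.symm.toMonoidHom))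
    (CoprodI.lift fun b => match b with
      | true => Coprod.inl.comp MulEquiv.ulift.toMonoidHom
      | false => Coprod.inr.comp MulEquiv.ulift.toMonoidHom)
    (Coprod.hom_ext (by ext; simp) (by ext; simp))
    (CoprodI.ext_hom _ _ fun b => by cases b <;> ext <;> simp)

lemma coprodEquivCoprodI_symm_of_true (s : S) :
    coprodEquivCoprodI.symm (CoprodI.of (i := true) (ULift.up s)) =
      (Coprod.inl s : Coprod S T) :=
  coprodEquivCoprodI.symm_apply_eq.2 rfl

lemma range_inl_eq_image_range_of :
    Set.range (Coprod.inl : S →* Coprod S T) =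
      coprodEquivCoprodI.symm '' Set.range (CoprodI.of (i := true)) := by
  rw [← Set.range_comp]
  exact (Equiv.ulift.surjective.range_comp _).symm

end Coprod

theorem cstar_stmt10_general {S T : Type*} [Monoid S] [Monoid T]
    [IsLeftCancelMul (Monoid.Coprod S T)]
    (h : Monoid.Coprod S T → Option (Monoid.Coprod S T))
    (hh : InInvHull h)
    (hmap : ∃ s s' : S,
      h (Monoid.Coprod.inl s) = some (Monoid.Coprod.inl s')) :
    InInvHullOn (Set.range (⇑(Monoid.Coprod.inl : S →* Monoid.Coprod S T))) h := by
  obtain ⟨s, s', hs⟩ := hmap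
  have : IsLeftCancelMul (Monoid.CoprodI (coprodSummand S T)) :=
    coprodEquivCoprodI.symm.injective.isLeftCancelMul _ (map_mul coprodEquivCoprodI.symm)
  have hs' : pconj coprodEquivCoprodI h (Monoid.CoprodI.of (i := true) (ULift.up s)) =
      some (Monoid.CoprodI.of (i := true) (ULift.up s')) := by
    rw [pconj, coprodEquivCoprodI_symm_of_true, hs]
    rfl
  have hcopy := (hh.pconj coprodEquivCoprodI).inInvHullOn_range_of hs'
  rw [← pconj_symm_pconj coprodEquivCoprodI h, range_inl_eq_image_range_of]
  exact hcopy.pconj coprodEquivCoprodI.symm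

/-- For nontrivial left cancellative monoids `S`, `T` whose coproduct
is left cancellative: if `h ∈ I_ℓ(S ∗ T)` maps some element of `ι_S(S)` into `ι_S(S)`,
then `h` lies in the canonical copy of `I_ℓ(S)` inside the partial bijections of
`S ∗ T`. -/
theorem cstar_stmt10 {S T : Type*} [Monoid S] [Monoid T]
    [IsLeftCancelMul S] [IsLeftCancelMul T]
    [IsLeftCancelMul (Monoid.Coprod S T)]
    (hS : ∃ s : S, s ≠ 1) (hT : ∃ t : T, t ≠ 1)
    (h : Monoid.Coprod S T → Option (Monoid.Coprod S T))
    (hh : InInvHull h)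
    (hmap : ∃ s s' : S,
      h (Monoid.Coprod.inl s) = some (Monoid.Coprod.inl s')) :
    InInvHullOn (Set.range (⇑(Monoid.Coprod.inl : S →* Monoid.Coprod S T))) h :=
  cstar_stmt10_general h hh hmap

end SgC
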